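/- For rooted labeled trees T and T' over label alphabet Σ and a metric cost function γ : Σ^⊥ × Σ^⊥ → ℝ, SdTed(T, T') = 0 if and only if T and T' are isomorphic as rooted labeled trees. -/

import Mathlib

open scoped Classical

/-- A rooted labeled tree with vertex set `V` and labels in `σ`, encoded by a
parent function: every vertex reaches the root by iterating `par`, and the
root is a fixed point of `par`. -/
structure LTree (V : Type) (σ : Type) where
  root : V
  par : V → V
  label : V → σ
  par_root : par root = root
  acyc : ∀ w : V, ∃ k : ℕ, par^[k] w = root

namespace LTree

variable {V V' V'' : Type} {σ : Type}

/-- The depth of a vertex: its distance to the root. -/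
noncomputable def depth (T : LTree V σ) (w : V) : ℕ := Nat.find (T.acyc w)

/-- `T.Desc v w` means `w` is a descendant of `v` (or `w = v`), i.e. `w` belongs
to the subtree `T[v]` rooted at `v`. -/
def Desc (T : LTree V σ) (v w : V) : Prop := ∃ k : ℕ, T.par^[k] w = v

/-- A structure and depth preserving mapping (SdM) between rooted labeled trees. -/
def IsSdM (T : LTree V σ) (T' : LTree V' σ) (M : Finset (V × V')) : Prop :=
  (∀ p ∈ M, ∀ q ∈ M, (p.1 = q.1 ↔ p.2 = q.2)) ∧
  (T.root, T'.root) ∈ M ∧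
  (∀ p ∈ M, p.1 ≠ T.root → (T.par p.1, T'.par p.2) ∈ M)

/-- An isomorphism of rooted labeled trees: a bijection of the vertex sets
preserving the root, the parent relation (hence all edges), and all labels. -/
structure Iso (T : LTree V σ) (T' : LTree V' σ) where
  e : V ≃ V'
  root_eq : e T.root = T'.root
  par_eq : ∀ w, e (T.par w) = T'.par (e w)
  label_eq : ∀ w, T'.label (e w) = T.label w

/-- `γ` is a metric on `Σ ∪ {⊥}` (where `⊥` is encoded by `none`). -/
def IsMetricCost (γ : Option σ → Option σ → ℝ) : Prop :=
  (∀ a b, γ a b = 0 ↔ a = b) ∧ (∀ a b, γ a b = γ b a) ∧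
  (∀ a b c, γ a c ≤ γ a b + γ b c)

/-- The cost `γ(M)` of a mapping `M`: relabeling costs for matched pairs plus
deletion costs for unmatched vertices of `T` plus insertion costs for
unmatched vertices of `T'`. -/
noncomputable def cost [Fintype V] [Fintype V'] (γ : Option σ → Option σ → ℝ)
    (T : LTree V σ) (T' : LTree V' σ) (M : Finset (V × V')) : ℝ :=
  (∑ p ∈ M, γ (some (T.label p.1)) (some (T'.label p.2)))
  + (∑ w ∈ Finset.univ.filter (fun w : V => ∀ p ∈ M, p.1 ≠ w),
      γ (some (T.label w)) none)
  + (∑ w' ∈ Finset.univ.filter (fun w' : V' => ∀ p ∈ M, p.2 ≠ w'),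
      γ none (some (T'.label w')))

/-- The structure and depth preserving tree edit distance: the minimum cost
of a structure and depth preserving mapping between `T` and `T'`. -/
noncomputable def SdTed [Fintype V] [Fintype V'] (γ : Option σ → Option σ → ℝ)
    (T : LTree V σ) (T' : LTree V' σ) : ℝ :=
  sInf {c : ℝ | ∃ M : Finset (V × V'), IsSdM T T' M ∧ cost γ T T' M = c}

theorem Desc.par {T : LTree V σ} {v w : V} (h : T.Desc v w) (hw : w ≠ v) :
    T.Desc v (T.par w) := by
  obtain ⟨k, hk⟩ := h
  cases k with
  | zero => exact absurd hk hw
  | succ k => exact ⟨k, by rwa [Function.iterate_succ_apply] at hk⟩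

/-- The parent function of the subtree `T[v]`. -/
noncomputable def subPar (T : LTree V σ) (v : V) (w : {w : V // T.Desc v w}) :
    {w : V // T.Desc v w} :=
  if h : (w : V) = v then ⟨v, 0, rfl⟩ else ⟨T.par w, w.2.par h⟩

/-- The subtree `T[v]` of `T` rooted at `v`, induced by `v` and all its
descendants. -/
noncomputable def sub (T : LTree V σ) (v : V) : LTree {w : V // T.Desc v w} σ where
  root := ⟨v, 0, rfl⟩
  par := subPar T v
  label := fun w => T.label w
  par_root := dif_pos rfl
  acyc := by
    have key : ∀ (k : ℕ) (w : {w : V // T.Desc v w}), T.par^[k] (w : V) = v →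
        (subPar T v)^[k] w = ⟨v, 0, rfl⟩ := by
      intro k
      induction k with
      | zero => intro w hw; exact Subtype.ext hw
      | succ k ih =>
        intro w hw
        by_cases hv : (w : V) = v
        · rw [Function.iterate_succ_apply]
          have : subPar T v w = ⟨v, 0, rfl⟩ := dif_pos hv
          rw [this]
          have hfix : subPar T v ⟨v, 0, rfl⟩ = ⟨v, 0, rfl⟩ := dif_pos rfl
          exact Function.iterate_fixed hfix k
        · rw [Function.iterate_succ_apply]
          have : subPar T v w = ⟨T.par w, w.2.par hv⟩ := dif_neg hv
          rw [this]
          exact ih _ (by rwa [Function.iterate_succ_apply] at hw)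
    intro w
    obtain ⟨k, hk⟩ := w.2
    exact ⟨k, key k w hk⟩

end LTree

open LTree

/-! Since a metric is nonnegative, a mapping of cost zero matches only equal labels and leaves
no vertex of either tree unmatched; being definite it is then the graph of a bijection, which
structure preservation forces to commute with the parent maps. Conversely, the graph of an
isomorphism is a mapping of cost zero. The infimum defining `SdTed` is a minimum because there
are only finitely many mappings. -/

namespace LTree

variable {V V' : Type} {σ : Type}

theorem IsMetricCost.nonneg {γ : Option σ → Option σ → ℝ} (hγ : IsMetricCost γ)
    (a b : Option σ) : 0 ≤ γ a b := by
  obtain ⟨hid, hsymm, htri⟩ := hγ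
  have := htri a b a
  rw [(hid a a).mpr rfl, hsymm b a] at this
  linarith

theorem isSdM_root_singleton (T : LTree V σ) (T' : LTree V' σ) :
    IsSdM T T' {(T.root, T'.root)} := by
  refine ⟨?_, Finset.mem_singleton_self _, ?_⟩
  · simp
  · simp +contextual

section Cost

variable [Fintype V] [Fintype V'] {γ : Option σ → Option σ → ℝ}
  {T : LTree V σ} {T' : LTree V' σ} {M : Finset (V × V')}

theorem cost_nonneg (hγ : IsMetricCost γ) (M : Finset (V × V')) : 0 ≤ cost γ T T' M := by
  have h0 := hγ.nonneg
  unfold cost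
  exact add_nonneg (add_nonneg (Finset.sum_nonneg fun _ _ => h0 _ _)
    (Finset.sum_nonneg fun _ _ => h0 _ _)) (Finset.sum_nonneg fun _ _ => h0 _ _)

theorem cost_eq_zero_iff (hγ : IsMetricCost γ) :
    cost γ T T' M = 0 ↔ (∀ p ∈ M, T.label p.1 = T'.label p.2) ∧
      (∀ w, ∃ w', (w, w') ∈ M) ∧ (∀ w', ∃ w, (w, w') ∈ M) := by
  have h0 := hγ.nonneg
  unfold cost
  rw [add_eq_zero_iff_of_nonneg, add_eq_zero_iff_of_nonneg]
  · simp [Finset.sum_eq_zero_iff_of_nonneg, h0, hγ.1, and_assoc]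
  all_goals first
    | exact Finset.sum_nonneg fun _ _ => h0 _ _
    | exact add_nonneg (Finset.sum_nonneg fun _ _ => h0 _ _) (Finset.sum_nonneg fun _ _ => h0 _ _)

variable (γ T T')

theorem finite_setOf_isSdM_cost :
    {c : ℝ | ∃ M, IsSdM T T' M ∧ cost γ T T' M = c}.Finite :=
  (Set.finite_range (cost γ T T')).subset fun _ ⟨M, _, hM⟩ => ⟨M, hM⟩

theorem exists_isSdM_cost_eq_sdted : ∃ M, IsSdM T T' M ∧ cost γ T T' M = SdTed γ T T' := by
  have hne : {c : ℝ | ∃ M, IsSdM T T' M ∧ cost γ T T' M = c}.Nonempty :=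
    ⟨_, _, isSdM_root_singleton T T', rfl⟩
  exact hne.csInf_mem (finite_setOf_isSdM_cost γ T T')

theorem sdted_le_cost (hM : IsSdM T T' M) : SdTed γ T T' ≤ cost γ T T' M :=
  csInf_le (finite_setOf_isSdM_cost γ T T').bddBelow ⟨M, hM, rfl⟩

variable {γ T T'}

theorem sdted_eq_zero_iff (hγ : IsMetricCost γ) :
    SdTed γ T T' = 0 ↔ ∃ M, IsSdM T T' M ∧ cost γ T T' M = 0 := by
  obtain ⟨M₀, hM₀, hcost⟩ := exists_isSdM_cost_eq_sdted γ T T'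
  refine ⟨fun h => ⟨M₀, hM₀, hcost.trans h⟩, fun ⟨M, hM, hM0⟩ => ?_⟩
  exact le_antisymm (hM0 ▸ sdted_le_cost γ T T' hM) (hcost ▸ cost_nonneg hγ M₀)

end Cost

section Iso

variable {T : LTree V σ} {T' : LTree V' σ}

noncomputable def Iso.graph [Fintype V] (e : Iso T T') : Finset (V × V') :=
  Finset.univ.image fun w => (w, e.e w)

theorem Iso.mem_graph [Fintype V] (e : Iso T T') {p : V × V'} : p ∈ e.graph ↔ e.e p.1 = p.2 := by
  simp only [graph, Finset.mem_image, Finset.mem_univ, true_and]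
  exact ⟨fun ⟨w, hw⟩ => hw ▸ rfl, fun h => ⟨p.1, h ▸ rfl⟩⟩

theorem Iso.isSdM_graph [Fintype V] (e : Iso T T') : IsSdM T T' e.graph := by
  simp only [IsSdM, Iso.mem_graph]
  refine ⟨fun p hp q hq => ?_, e.root_eq, fun p hp _ => by rw [e.par_eq, hp]⟩
  rw [← hp, ← hq, e.e.injective.eq_iff]

theorem Iso.cost_graph [Fintype V] [Fintype V'] {γ : Option σ → Option σ → ℝ}
    (hγ : IsMetricCost γ) (e : Iso T T') : cost γ T T' e.graph = 0 := by
  refine (cost_eq_zero_iff hγ).mpr ⟨fun p hp => ?_, fun w => ⟨e.e w, ?_⟩, fun w' => ⟨e.e.symm w', ?_⟩⟩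
  · rw [← (e.mem_graph.mp hp), e.label_eq]
  · exact e.mem_graph.mpr rfl
  · exact e.mem_graph.mpr (e.e.apply_symm_apply w')

theorem IsSdM.nonempty_iso {M : Finset (V × V')} (hM : IsSdM T T' M)
    (hlabel : ∀ p ∈ M, T.label p.1 = T'.label p.2) (hleft : ∀ w, ∃ w', (w, w') ∈ M)
    (hright : ∀ w', ∃ w, (w, w') ∈ M) : Nonempty (Iso T T') := by
  obtain ⟨hdef, hroot, hpar⟩ := hM
  choose f hf using hleft
  have hmem_iff {w w'} : (w, w') ∈ M ↔ f w = w' :=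
    ⟨fun h => (hdef _ (hf w) _ h).mp rfl, fun h => h ▸ hf w⟩
  have hbij : Function.Bijective f := by
    refine ⟨fun a b hab => (hdef _ (hf a) _ (hmem_iff.mpr hab.symm)).mpr rfl, fun w' => ?_⟩
    obtain ⟨w, hw⟩ := hright w'
    exact ⟨w, hmem_iff.mp hw⟩
  have hf_root : f T.root = T'.root := hmem_iff.mp hroot
  refine ⟨⟨Equiv.ofBijective f hbij, hf_root, fun w => ?_, fun w => (hlabel _ (hf w)).symm⟩⟩
  by_cases hw : w = T.root
  · simp only [Equiv.ofBijective_apply, hw, T.par_root, hf_root, T'.par_root]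
  · exact hmem_iff.mp (hpar _ (hf w) hw)

end Iso

end LTree

/-- For rooted labeled trees `T` and `T'` over label alphabet
`σ` and a metric cost function `γ : Σ^⊥ × Σ^⊥ → ℝ`, `SdTed(T, T') = 0` if and
only if `T` and `T'` are isomorphic as rooted labeled trees. -/
theorem sdted_eq_zero_iff_iso {σ : Type} (γ : Option σ → Option σ → ℝ)
    (hγ : IsMetricCost γ) {V V' : Type} [Fintype V] [Fintype V']
    (T : LTree V σ) (T' : LTree V' σ) :
    SdTed γ T T' = 0 ↔ Nonempty (Iso T T') := by
  rw [sdted_eq_zero_iff hγ]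
  constructor
  · rintro ⟨M, hM, hcost⟩
    obtain ⟨hlabel, hleft, hright⟩ := (cost_eq_zero_iff hγ).mp hcost
    exact hM.nonempty_iso hlabel hleft hright
  · rintro ⟨e⟩
    exact ⟨e.graph, e.isSdM_graph, e.cost_graph hγ⟩
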